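/- arXiv:cs/0202031 — 13 statements merged into one kernel-verified Lean document; each statement's English description precedes it below -/
import Mathlib

section
/- Given a cumulative finitary operation F, the operation C defined by C(X) = F(A) if there exists a finite subset A of Cn(X) with Cn(X) ⊆ F(A), and C(X) = Cn(X) otherwise, is well-defined (independent of the choice of A), extends F on finite sets, and is cumulative. -/
/-- the smallest cumulative extension of a cumulative finitary
operation is well defined, extends it, and is cumulative. -/
theorem stmt_4 {L : Type*} (Cn : Set L → Set L) (F : Set L → Set L)
    (hInc : ∀ X : Set L, X ⊆ Cn X)
    (hMono : ∀ X Y : Set L, X ⊆ Y → Cn X ⊆ Cn Y)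
    (hIdem : ∀ X : Set L, Cn (Cn X) = Cn X)
    (hCpt : ∀ (X : Set L) (a : L), a ∈ Cn X → ∃ A : Set L, A ⊆ X ∧ A.Finite ∧ a ∈ Cn A)
    -- F is a cumulative finitary inference operation
    (hFInc : ∀ A : Set L, A.Finite → A ⊆ F A)
    (hFLAbs : ∀ A : Set L, A.Finite → Cn (F A) = F A)
    (hFRAbs : ∀ A B : Set L, A.Finite → B.Finite → Cn A = Cn B → F A = F B)
    (hFCum : ∀ A B : Set L, A.Finite → B.Finite → B ⊆ F A → F (A ∪ B) = F A) :
    ∃ C : Set L → Set L,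
      -- well-definedness: C(X) = F(A) for ANY suitable finite A ⊆ Cn(X)
      (∀ (X A : Set L), A.Finite → A ⊆ Cn X → Cn X ⊆ F A → C X = F A) ∧
      -- otherwise C(X) = Cn(X)
      (∀ X : Set L, (¬ ∃ A : Set L, A.Finite ∧ A ⊆ Cn X ∧ Cn X ⊆ F A) → C X = Cn X) ∧
      -- C extends F on finite sets
      (∀ A : Set L, A.Finite → C A = F A) ∧
      -- C is a cumulative inference operation
      (∀ X : Set L, X ⊆ C X) ∧
      (∀ X : Set L, Cn (C X) = C X) ∧
      (∀ X Y : Set L, Cn X = Cn Y → C X = C Y) ∧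
      (∀ X Y : Set L, Y ⊆ C X → C (X ∪ Y) ⊆ C X) ∧
      (∀ X Y : Set L, Y ⊆ C X → C X ⊆ C (X ∪ Y)) := by
  classical
  -- key uniqueness lemma
  have uniq : ∀ (X A B : Set L), A.Finite → A ⊆ Cn X → Cn X ⊆ F A →
      B.Finite → B ⊆ Cn X → Cn X ⊆ F B → F A = F B := by
    intro X A B hA hA1 hA2 hB hB1 hB2
    have h1 : F (A ∪ B) = F A := hFCum A B hA hB (hB1.trans hA2)
    have h2 : F (B ∪ A) = F B := hFCum B A hB hA (hA1.trans hB2)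
    rw [Set.union_comm] at h1
    rw [← h1, h2]
  set P : Set L → Prop := fun X => ∃ A : Set L, A.Finite ∧ A ⊆ Cn X ∧ Cn X ⊆ F A with hP
  set C : Set L → Set L := fun X => if h : P X then F h.choose else Cn X with hC
  -- the defining clauses
  have wd : ∀ (X A : Set L), A.Finite → A ⊆ Cn X → Cn X ⊆ F A → C X = F A := by
    intro X A hA hA1 hA2
    have h : P X := ⟨A, hA, hA1, hA2⟩
    have hsp := h.choose_spec
    simp only [hC, dif_pos h]
    exact uniq X h.choose A hsp.1 hsp.2.1 hsp.2.2 hA hA1 hA2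
  have wd2 : ∀ X : Set L, ¬ P X → C X = Cn X := by
    intro X h; simp only [hC, dif_neg h]
  have ext : ∀ A : Set L, A.Finite → C A = F A := by
    intro A hA
    refine wd A A hA (hInc A) ?_
    have : Cn A ⊆ Cn (F A) := hMono _ _ (hFInc A hA)
    rwa [hFLAbs A hA] at this
  have inc : ∀ X : Set L, X ⊆ C X := by
    intro X
    by_cases h : P X
    · obtain ⟨A, hA, hA1, hA2⟩ := h
      rw [wd X A hA hA1 hA2]
      exact (hInc X).trans hA2
    · rw [wd2 X h]; exact hInc X
  have labs : ∀ X : Set L, Cn (C X) = C X := by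
    intro X
    by_cases h : P X
    · obtain ⟨A, hA, hA1, hA2⟩ := h
      rw [wd X A hA hA1 hA2]; exact hFLAbs A hA
    · rw [wd2 X h]; exact hIdem X
  have rabs : ∀ X Y : Set L, Cn X = Cn Y → C X = C Y := by
    intro X Y hXY
    by_cases h : P X
    · obtain ⟨A, hA, hA1, hA2⟩ := h
      rw [wd X A hA hA1 hA2, wd Y A hA (hXY ▸ hA1) (hXY ▸ hA2)]
    · have h' : ¬ P Y := by
        intro ⟨A, hA, hA1, hA2⟩; exact h ⟨A, hA, hXY ▸ hA1, hXY ▸ hA2⟩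
      rw [wd2 X h, wd2 Y h', hXY]
  have cum : ∀ X Y : Set L, Y ⊆ C X → C (X ∪ Y) = C X := by
    intro X Y hY
    by_cases h : P X
    · obtain ⟨A, hA, hA1, hA2⟩ := h
      have hCX := wd X A hA hA1 hA2
      rw [hCX] at hY
      have hA1' : A ⊆ Cn (X ∪ Y) := hA1.trans (hMono _ _ Set.subset_union_left)
      have hsub : X ∪ Y ⊆ F A := Set.union_subset ((hInc X).trans hA2) hY
      have hA2' : Cn (X ∪ Y) ⊆ F A := by
        have := hMono _ _ hsub
        rwa [hFLAbs A hA] at this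
      rw [wd (X ∪ Y) A hA hA1' hA2', hCX]
    · have hY' : Y ⊆ Cn X := by rw [wd2 X h] at hY; exact hY
      have hEq : Cn (X ∪ Y) = Cn X := by
        apply Set.Subset.antisymm
        · have : X ∪ Y ⊆ Cn X := Set.union_subset (hInc X) hY'
          have := hMono _ _ this
          rwa [hIdem X] at this
        · exact hMono _ _ Set.subset_union_left
      exact rabs _ _ hEq
  exact ⟨C, wd, fun X h => wd2 X h, ext, inc, labs, rabs,
    fun X Y hY => (cum X Y hY).le, fun X Y hY => (cum X Y hY).ge⟩
end

section
/- If C is an operation satisfying Inclusion that also satisfies Cut, then its transform C' defined by C'(X) = {a : there exists a finite A ⊆ X such that a ∈ C(A ∪ Y) for all Y ⊆ C(X)} satisfies Cautious Monotonicity, i.e., Y ⊆ C'(X) implies C'(X) ⊆ C'(X ∪ Y). -/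
/-- The transform C' of an operation C. -/
def transform {L : Type*} (C : Set L → Set L) (X : Set L) : Set L :=
  {a | ∃ A : Set L, A.Finite ∧ A ⊆ X ∧ ∀ Y : Set L, Y ⊆ C X → a ∈ C (A ∪ Y)}

/-- if C satisfies Inclusion and Cut, then its transform
satisfies Cautious Monotonicity. -/
theorem stmt_5 {L : Type*} (C : Set L → Set L)
    (hCInc : ∀ X : Set L, X ⊆ C X)
    (hCut : ∀ X Y : Set L, Y ⊆ C X → C (X ∪ Y) ⊆ C X) :
    ∀ X Y : Set L, Y ⊆ transform C X → transform C X ⊆ transform C (X ∪ Y) := by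
  intro X Y hY a ha
  obtain ⟨A, hAfin, hAX, hA⟩ := ha
  refine ⟨A, hAfin, hAX.trans Set.subset_union_left, ?_⟩
  intro Z hZ
  have hYC : Y ⊆ C X := fun y hy => by
    obtain ⟨B, _, hBX, hB⟩ := hY hy
    have := hB X (hCInc X)
    rwa [Set.union_eq_self_of_subset_left hBX] at this
  exact hA Z (hZ.trans (hCut X Y hYC))
end

section
/- The inference operation C_W defined by a cumulative model W is cumulative: it is supraclassical and satisfies Cut and Cautious Monotonicity. -/
/-- A state `t` is minimal in `V` with respect to `prec`. -/
def isMinimal {S : Type*} (prec : S → S → Prop) (V : Set S) (t : S) : Prop :=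
  t ∈ V ∧ ∀ s ∈ V, ¬ prec s t

/-- A set `V` of states is smooth with respect to `prec`. -/
def smoothSet {S : Type*} (prec : S → S → Prop) (V : Set S) : Prop :=
  ∀ t ∈ V, isMinimal prec V t ∨ ∃ s, isMinimal prec V s ∧ prec s t

/-- A state satisfies a set of formulas iff all its worlds do. -/
def stateSat {L U S : Type*} (sat : U → L → Prop) (l : S → Set U) (s : S) (X : Set L) : Prop :=
  ∀ m ∈ l s, ∀ x ∈ X, sat m x

/-- The set X̂ of states satisfying X. -/
def hatSet {L U S : Type*} (sat : U → L → Prop) (l : S → Set U) (X : Set L) : Set S :=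
  {s | stateSat sat l s X}

/-- The inference operation defined by a model. -/
def CW {L U S : Type*} (sat : U → L → Prop) (l : S → Set U) (prec : S → S → Prop)
    (X : Set L) : Set L :=
  {a | ∀ s, isMinimal prec (hatSet sat l X) s → stateSat sat l s {a}}

/-- the operation defined by a cumulative model is cumulative:
supraclassical, and satisfies Cut and Cautious Monotonicity. -/
theorem stmt_8 {L U S : Type*} (Cn : Set L → Set L) (sat : U → L → Prop)
    (l : S → Set U) (prec : S → S → Prop)
    (hCn : ∀ (X : Set L) (a : L), a ∈ Cn X ↔ ∀ m : U, (∀ x ∈ X, sat m x) → sat m a)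
    (hne : ∀ s : S, (l s).Nonempty)
    (hsmooth : ∀ X : Set L, smoothSet prec (hatSet sat l X)) :
    (∀ X : Set L, Cn X ⊆ CW sat l prec X) ∧
    (∀ X Y : Set L, Y ⊆ CW sat l prec X →
      CW sat l prec (X ∪ Y) ⊆ CW sat l prec X) ∧
    (∀ X Y : Set L, Y ⊆ CW sat l prec X →
      CW sat l prec X ⊆ CW sat l prec (X ∪ Y)) := by
  have hsub : ∀ X Y : Set L, hatSet sat l (X ∪ Y) ⊆ hatSet sat l X := by
    intro X Y s hs m hm x hx
    exact hs m hm x (Or.inl hx)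
  -- key: equality of minimal states
  have key : ∀ X Y : Set L, Y ⊆ CW sat l prec X →
      ∀ t, isMinimal prec (hatSet sat l X) t ↔ isMinimal prec (hatSet sat l (X ∪ Y)) t := by
    intro X Y hY t
    have hmem : ∀ u, isMinimal prec (hatSet sat l X) u → u ∈ hatSet sat l (X ∪ Y) := by
      intro u hu m hm x hx
      rcases hx with hx | hx
      · exact hu.1 m hm x hx
      · exact hY hx u hu m hm x rfl
    constructor
    · intro ht
      exact ⟨hmem t ht, fun s hs hps => ht.2 s (hsub X Y hs) hps⟩
    · intro ht
      have htX : t ∈ hatSet sat l X := hsub X Y ht.1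
      rcases hsmooth X t htX with h | ⟨s, hs, hps⟩
      · exact h
      · exact absurd hps (ht.2 s (hmem s hs))
  refine ⟨?_, ?_, ?_⟩
  · intro X a ha s hs m hm b hb
    subst hb
    exact (hCn X b).mp ha m (fun x hx => hs.1 m hm x hx)
  · intro X Y hY a ha s hs
    exact ha s ((key X Y hY s).mp hs)
  · intro X Y hY a ha s hs
    exact ha s ((key X Y hY s).mpr hs)
end

section
/- The relation ≺ defined on C-equivalence classes by [X] ≺ [Y] iff [X] ≠ [Y] and there exists X' ⊆ C(Y) with C(X') = C(X) is asymmetric, for any cumulative operation C. -/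
/-- the preference relation defined on C-equivalence classes by
[X] ≺ [Y] iff C(X) ≠ C(Y) and there is X' ⊆ C(Y) with C(X') = C(X) is
asymmetric, for any cumulative operation C. -/
theorem stmt_10 {L : Type*} (Cn C : Set L → Set L)
    (hInc : ∀ X : Set L, X ⊆ Cn X)
    (hMono : ∀ X Y : Set L, X ⊆ Y → Cn X ⊆ Cn Y)
    (hIdem : ∀ X : Set L, Cn (Cn X) = Cn X)
    (hCpt : ∀ (X : Set L) (a : L), a ∈ Cn X → ∃ A : Set L, A ⊆ X ∧ A.Finite ∧ a ∈ Cn A)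
    (hCInc : ∀ X : Set L, X ⊆ C X)
    (hLAbs : ∀ X : Set L, Cn (C X) = C X)
    (hRAbs : ∀ X Y : Set L, Cn X = Cn Y → C X = C Y)
    (hCut : ∀ X Y : Set L, Y ⊆ C X → C (X ∪ Y) ⊆ C X)
    (hCM : ∀ X Y : Set L, Y ⊆ C X → C X ⊆ C (X ∪ Y)) :
    ∀ X Y : Set L,
      (C X ≠ C Y ∧ ∃ X' : Set L, X' ⊆ C Y ∧ C X' = C X) →
      ¬ (C Y ≠ C X ∧ ∃ Y' : Set L, Y' ⊆ C X ∧ C Y' = C Y) := by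
  rintro X Y ⟨hne, X', hX'Y, hCX'⟩ ⟨-, Y', hY'X, hCY'⟩
  apply hne
  have h1 : Y' ⊆ C X' := by rw [hCX']; exact hY'X
  have h2 : X' ⊆ C Y' := by rw [hCY']; exact hX'Y
  have e1 : C (X' ∪ Y') = C X' :=
    Set.Subset.antisymm (hCut X' Y' h1) (hCM X' Y' h1)
  have e2 : C (Y' ∪ X') = C Y' :=
    Set.Subset.antisymm (hCut Y' X' h2) (hCM Y' X' h2)
  rw [Set.union_comm] at e1
  rw [← hCX', ← hCY', ← e1, ← e2]
end

section
/- The smallest cumulative extension of a strongly cumulative finitary operation is strongly cumulative: if F is a finitary operation satisfying finitary Strong Cumulativity, then the operation C defined by C(X) = F(A) when there is a finite A ⊆ Cn(X) with Cn(X) ⊆ F(A) and C(X) = Cn(X) otherwise, satisfies Strong Cumulativity. -/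
/-!
Call `X` *based* if some finite `A ⊆ Cn X` has `Cn X ⊆ F A`; then `C X = F A`, and otherwise
`C X = Cn X`. In a loop `X i ⊆ C (X (i + 1))` with no based index, `C = Cn` along the loop and the
`Cn (X i)` increase around a cycle, so they are all equal. Otherwise let `B i` be the finite base
of the first based index at or after `i`. Then `B i ⊆ F (B (i + 1))` for every `i`, so finitary
Strong Cumulativity makes all `F (B i)` equal to one set `G`. Going backwards from a based index
through unbased ones, every `Cn (X i)` contains some base `B k`, and it is contained in
`F (B i) = G = F (B k)`, so every `X i` is based and `C (X i) = G`.
-/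

namespace Function

variable {α : Type*} {f : α → α} {S P : α → Prop}

theorem induction_of_exists_iterate (hreach : ∀ a, ∃ m, S (f^[m] a)) (hS : ∀ a, S a → P a)
    (hstep : ∀ a, ¬ S a → P (f a) → P a) (a : α) : P a := by
  obtain ⟨m, hm⟩ := hreach a
  induction m generalizing a with
  | zero => exact hS a hm
  | succ m ih =>
    by_cases ha : S a
    · exact hS a ha
    · exact hstep a ha (ih (f a) (by rwa [iterate_succ_apply] at hm))

variable [DecidablePred S]

def firstHit (hreach : ∀ a, ∃ m, S (f^[m] a)) (a : α) : α :=
  f^[Nat.find (hreach a)] a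

theorem firstHit_mem (hreach : ∀ a, ∃ m, S (f^[m] a)) (a : α) : S (firstHit hreach a) :=
  Nat.find_spec (hreach a)

variable {hreach : ∀ a, ∃ m, S (f^[m] a)} {a : α}

theorem firstHit_of_mem (ha : S a) : firstHit hreach a = a := by
  simp [firstHit, (Nat.find_eq_zero (hreach a)).2 ha]

theorem firstHit_apply_of_not_mem (ha : ¬ S a) : firstHit hreach (f a) = firstHit hreach a := by
  obtain ⟨m, hm⟩ : ∃ m, Nat.find (hreach a) = m + 1 :=
    Nat.exists_eq_succ_of_ne_zero fun h => ha (by simpa [h] using Nat.find_spec (hreach a))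
  have hfind : Nat.find (hreach (f a)) = m := by
    rw [Nat.find_eq_iff]
    refine ⟨?_, fun k hk => ?_⟩
    · simpa [hm, iterate_succ_apply] using Nat.find_spec (hreach a)
    · simpa [iterate_succ_apply] using Nat.find_min (hreach a) (show k + 1 < _ by omega)
  simp only [firstHit, hfind, hm, iterate_succ_apply]

end Function

namespace Fin

variable {n : ℕ} [NeZero n]

theorem iterate_add_one_val_sub (a b : Fin n) : (· + 1)^[(b - a).val] a = b := by
  open Fin.CommRing in
  rw [add_right_iterate_apply, nsmul_one, cast_val_eq_self, add_sub_cancel]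

theorem iterate_sub_one_val_sub (a b : Fin n) : (· - 1)^[(a - b).val] a = b := by
  open Fin.CommRing in
  simp_rw [sub_eq_add_neg, add_right_iterate_apply, smul_neg, nsmul_one, cast_val_eq_self,
    ← sub_eq_add_neg, sub_sub_cancel]

theorem eq_of_le_add_one {β : Type*} [PartialOrder β] {g : Fin n → β}
    (h : ∀ i, g i ≤ g (i + 1)) (i j : Fin n) : g i = g j := by
  have hle : ∀ i j, g i ≤ g j := fun i =>
    Function.induction_of_exists_iterate (f := (· - 1)) (S := (· = i)) (P := (g i ≤ g ·))
      (fun a => ⟨(a - i).val, iterate_sub_one_val_sub a i⟩) (fun _ ha => ha ▸ le_rfl)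
      (fun a _ ih => ih.trans (by simpa using h (a - 1)))
  exact (hle i j).antisymm (hle j i)

end Fin

def HasFiniteBase {L : Type*} (Cn F : Set L → Set L) (X : Set L) : Prop :=
  ∃ A : Set L, A.Finite ∧ A ⊆ Cn X ∧ Cn X ⊆ F A

section SmallestCumulativeExtension

variable {L : Type*} {Cn F C : Set L → Set L}

theorem cn_subset_smallestExtension
    (hC1 : ∀ (X A : Set L), A.Finite → A ⊆ Cn X → Cn X ⊆ F A → C X = F A)
    (hC2 : ∀ X : Set L, ¬ HasFiniteBase Cn F X → C X = Cn X) (Y : Set L) : Cn Y ⊆ C Y := by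
  by_cases h : HasFiniteBase Cn F Y
  · obtain ⟨A, hA, hACn, hCnF⟩ := h
    rw [hC1 Y A hA hACn hCnF]
    exact hCnF
  · rw [hC2 Y h]

theorem cn_smallestExtension_eq (hIdem : ∀ X : Set L, Cn (Cn X) = Cn X)
    (hFLAbs : ∀ A : Set L, A.Finite → Cn (F A) = F A)
    (hC1 : ∀ (X A : Set L), A.Finite → A ⊆ Cn X → Cn X ⊆ F A → C X = F A)
    (hC2 : ∀ X : Set L, ¬ HasFiniteBase Cn F X → C X = Cn X) (Y : Set L) : Cn (C Y) = C Y := by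
  by_cases h : HasFiniteBase Cn F Y
  · obtain ⟨A, hA, hACn, hCnF⟩ := h
    rw [hC1 Y A hA hACn hCnF, hFLAbs A hA]
  · rw [hC2 Y h, hIdem]

variable {n : ℕ} [NeZero n] {X : Fin n → Set L}

theorem smallestExtension_eq_of_forall_not_hasFiniteBase
    (hC2 : ∀ X : Set L, ¬ HasFiniteBase Cn F X → C X = Cn X)
    (hstep : ∀ i, Cn (X i) ⊆ C (X (i + 1))) (hX : ∀ i, ¬ HasFiniteBase Cn F (X i))
    (i j : Fin n) : C (X i) = C (X j) := by
  have hC : ∀ i, C (X i) = Cn (X i) := fun i => hC2 _ (hX i)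
  rw [hC, hC]
  exact Fin.eq_of_le_add_one (g := fun i => Cn (X i)) (fun i => hC (i + 1) ▸ hstep i) i j

theorem exists_base_subset_cn (hC2 : ∀ X : Set L, ¬ HasFiniteBase Cn F X → C X = Cn X)
    (hstep : ∀ i, Cn (X i) ⊆ C (X (i + 1))) {A : Fin n → Set L}
    (hACn : ∀ i, HasFiniteBase Cn F (X i) → A i ⊆ Cn (X i)) {k : Fin n}
    (hk : HasFiniteBase Cn F (X k)) (i : Fin n) :
    ∃ l, HasFiniteBase Cn F (X l) ∧ A l ⊆ Cn (X i) :=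
  Function.induction_of_exists_iterate (f := (· - 1)) (S := fun i => HasFiniteBase Cn F (X i))
    (P := fun i => ∃ l, HasFiniteBase Cn F (X l) ∧ A l ⊆ Cn (X i))
    (fun i => ⟨(i - k).val, by rwa [Fin.iterate_sub_one_val_sub]⟩)
    (fun i hi => ⟨i, hi, hACn i hi⟩)
    (fun i hi ⟨l, hl, hAl⟩ =>
      ⟨l, hl, hAl.trans (by simpa [hC2 _ hi] using hstep (i - 1))⟩) i

theorem smallestExtension_eq_of_hasFiniteBase (hFInc : ∀ A : Set L, A.Finite → A ⊆ F A)
    (hFLoop : ∀ A : Fin n → Set L, (∀ i, (A i).Finite) → (∀ i, A i ⊆ F (A (i + 1))) →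
      ∀ i j, F (A i) = F (A j))
    (hC1 : ∀ (X A : Set L), A.Finite → A ⊆ Cn X → Cn X ⊆ F A → C X = F A)
    (hC2 : ∀ X : Set L, ¬ HasFiniteBase Cn F X → C X = Cn X) (hCnC : ∀ Y, Cn Y ⊆ C Y)
    (hstep : ∀ i, Cn (X i) ⊆ C (X (i + 1))) {k : Fin n} (hk : HasFiniteBase Cn F (X k))
    (i j : Fin n) : C (X i) = C (X j) := by
  classical
  choose! A hAfin hACn hCnFA using fun i (h : HasFiniteBase Cn F (X i)) => h
  let Based : Fin n → Prop := fun j => HasFiniteBase Cn F (X j)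
  have hreach : ∀ i, ∃ m, Based ((· + 1)^[m] i) :=
    fun i => ⟨(k - i).val, by rwa [Fin.iterate_add_one_val_sub]⟩
  set B : Fin n → Set L := fun i => A (Function.firstHit hreach i)
  have hBfin : ∀ i, (B i).Finite :=
    fun i => hAfin _ (Function.firstHit_mem (S := Based) hreach i)
  have hB_of_base : ∀ i, HasFiniteBase Cn F (X i) → B i = A i :=
    fun i hi => congrArg A (Function.firstHit_of_mem hi)
  have hB_of_not_base : ∀ i, ¬ HasFiniteBase Cn F (X i) → B (i + 1) = B i :=
    fun i hi => congrArg A (Function.firstHit_apply_of_not_mem hi)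
  have hCB : ∀ i, C (X i) ⊆ F (B i) := Function.induction_of_exists_iterate hreach
    (fun i hi => by rw [hB_of_base i hi, hC1 _ _ (hAfin i hi) (hACn i hi) (hCnFA i hi)])
    (fun i hi ih => by rw [hC2 _ hi, ← hB_of_not_base i hi]; exact (hstep i).trans ih)
  have hloop : ∀ i, B i ⊆ F (B (i + 1)) := by
    intro i
    by_cases hi : HasFiniteBase Cn F (X i)
    · rw [hB_of_base i hi]
      exact (hACn i hi).trans ((hstep i).trans (hCB (i + 1)))
    · rw [← hB_of_not_base i hi]
      exact hFInc _ (hBfin _)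
  have hFB := hFLoop B hBfin hloop
  have hCF : ∀ i, C (X i) = F (B i) := by
    intro i
    obtain ⟨l, hl, hAl⟩ := exists_base_subset_cn hC2 hstep hACn hk i
    have hCnF : Cn (X i) ⊆ F (A l) := by
      rw [← hB_of_base l hl, hFB l i]
      exact (hCnC _).trans (hCB i)
    rw [hC1 _ _ (hAfin l hl) hAl hCnF, ← hB_of_base l hl, hFB]
  rw [hCF, hCF, hFB]

end SmallestCumulativeExtension

theorem stmt_11_general {L : Type*} (Cn F C : Set L → Set L)
    (hMono : ∀ X Y : Set L, X ⊆ Y → Cn X ⊆ Cn Y)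
    (hIdem : ∀ X : Set L, Cn (Cn X) = Cn X)
    -- F is a finitary inference operation
    (hFInc : ∀ A : Set L, A.Finite → A ⊆ F A)
    (hFLAbs : ∀ A : Set L, A.Finite → Cn (F A) = F A)
    -- F is strongly cumulative: supraclassical and satisfies the finitary Loop
    (hFLoop : ∀ (n : ℕ) [NeZero n] (A : Fin n → Set L),
      (∀ i, (A i).Finite) → (∀ i : Fin n, A i ⊆ F (A (i + 1))) →
      ∀ i j : Fin n, F (A i) = F (A j))
    -- C is the smallest cumulative extension of F
    (hC1 : ∀ (X A : Set L), A.Finite → A ⊆ Cn X → Cn X ⊆ F A → C X = F A)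
    (hC2 : ∀ X : Set L, (¬ ∃ A : Set L, A.Finite ∧ A ⊆ Cn X ∧ Cn X ⊆ F A) → C X = Cn X) :
    -- C satisfies Strong Cumulativity
    ∀ (n : ℕ) [NeZero n] (X : Fin n → Set L),
      (∀ i : Fin n, X i ⊆ C (X (i + 1))) →
      ∀ i j : Fin n, C (X i) = C (X j) := by
  intro n _ X hX
  have hstep : ∀ i, Cn (X i) ⊆ C (X (i + 1)) := fun i =>
    cn_smallestExtension_eq hIdem hFLAbs hC1 hC2 (X (i + 1)) ▸ hMono _ _ (hX i)
  by_cases h : ∃ k, HasFiniteBase Cn F (X k)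
  · obtain ⟨k, hk⟩ := h
    exact smallestExtension_eq_of_hasFiniteBase hFInc (hFLoop n) hC1 hC2
      (cn_subset_smallestExtension hC1 hC2) hstep hk
  · push Not at h
    exact smallestExtension_eq_of_forall_not_hasFiniteBase hC2 hstep h

/-- the smallest cumulative extension of a strongly cumulative
finitary operation is strongly cumulative. -/
theorem stmt_11 {L : Type*} (Cn F C : Set L → Set L)
    (hInc : ∀ X : Set L, X ⊆ Cn X)
    (hMono : ∀ X Y : Set L, X ⊆ Y → Cn X ⊆ Cn Y)
    (hIdem : ∀ X : Set L, Cn (Cn X) = Cn X)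
    (hCpt : ∀ (X : Set L) (a : L), a ∈ Cn X → ∃ A : Set L, A ⊆ X ∧ A.Finite ∧ a ∈ Cn A)
    -- F is a finitary inference operation
    (hFInc : ∀ A : Set L, A.Finite → A ⊆ F A)
    (hFLAbs : ∀ A : Set L, A.Finite → Cn (F A) = F A)
    (hFRAbs : ∀ A B : Set L, A.Finite → B.Finite → Cn A = Cn B → F A = F B)
    -- F is strongly cumulative: supraclassical and satisfies the finitary Loop
    (hFSup : ∀ A : Set L, A.Finite → Cn A ⊆ F A)
    (hFLoop : ∀ (n : ℕ) [NeZero n] (A : Fin n → Set L),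
      (∀ i, (A i).Finite) → (∀ i : Fin n, A i ⊆ F (A (i + 1))) →
      ∀ i j : Fin n, F (A i) = F (A j))
    -- C is the smallest cumulative extension of F
    (hC1 : ∀ (X A : Set L), A.Finite → A ⊆ Cn X → Cn X ⊆ F A → C X = F A)
    (hC2 : ∀ X : Set L, (¬ ∃ A : Set L, A.Finite ∧ A ⊆ Cn X ∧ Cn X ⊆ F A) → C X = Cn X) :
    -- C satisfies Strong Cumulativity
    ∀ (n : ℕ) [NeZero n] (X : Fin n → Set L),
      (∀ i : Fin n, X i ⊆ C (X (i + 1))) →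
      ∀ i j : Fin n, C (X i) = C (X j) :=
  stmt_11_general Cn F C hMono hIdem hFInc hFLAbs hFLoop hC1 hC2
end

section
/- If W = (S, l, ≺) is a cumulative model in which ≺ is irreflexive and transitive (a cumulative ordered model), then the operation C_W is strongly cumulative: for any n and sets X_0,…,X_{n-1} with X_i ⊆ C_W(X_{i+1}) (indices mod n), all C_W(X_i) coincide. -/
open Fin.NatCast in
theorem Fin.of_add_one_imp {n : ℕ} [NeZero n] {P : Fin n → Prop}
    (hP : ∀ j, P (j + 1) → P j) {i : Fin n} (hi : P i) (j : Fin n) : P j := by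
  have hsub : ∀ k : ℕ, P (i - k) := by
    intro k
    induction k with
    | zero => simpa using hi
    | succ k ih => exact hP _ (by rwa [Nat.cast_succ, ← sub_sub, sub_add_cancel])
  simpa [Fin.cast_val_eq_self] using hsub (i - j).val

section Model

variable {L U S : Type*} {sat : U → L → Prop} {l : S → Set U} {prec : S → S → Prop}
  {X Y : Set L}

theorem mem_hatSet_of_subset_CW (hXY : X ⊆ CW sat l prec Y) {s : S}
    (hs : isMinimal prec (hatSet sat l Y) s) : s ∈ hatSet sat l X :=
  fun m hm x hx ↦ hXY hx s hs m hm x rfl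

theorem exists_isMinimal_prec_of_subset_CW
    (htrans : ∀ s t v : S, prec s t → prec t v → prec s v)
    (hX : smoothSet prec (hatSet sat l X)) (hXY : X ⊆ CW sat l prec Y) {s t : S}
    (ht : isMinimal prec (hatSet sat l Y) t) (hts : prec t s) :
    ∃ t', isMinimal prec (hatSet sat l X) t' ∧ prec t' s := by
  rcases hX t (mem_hatSet_of_subset_CW hXY ht) with ht' | ⟨t', ht', ht't⟩
  · exact ⟨t, ht', hts⟩
  · exact ⟨t', ht', htrans _ _ _ ht't hts⟩

theorem isMinimal_of_cycle (htrans : ∀ s t v : S, prec s t → prec t v → prec s v)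
    (hsmooth : ∀ X : Set L, smoothSet prec (hatSet sat l X)) {n : ℕ} [NeZero n]
    {X : Fin n → Set L} (hcyc : ∀ i : Fin n, X i ⊆ CW sat l prec (X (i + 1)))
    {i : Fin n} {s : S} (hs : isMinimal prec (hatSet sat l (X i)) s) (j : Fin n) :
    isMinimal prec (hatSet sat l (X j)) s := by
  have hnone : ∀ k, ¬ ∃ t, isMinimal prec (hatSet sat l (X k)) t ∧ prec t s := by
    intro k hk
    obtain ⟨t, ht, hts⟩ := Fin.of_add_one_imp
      (P := fun k ↦ ∃ t, isMinimal prec (hatSet sat l (X k)) t ∧ prec t s)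
      (fun m ⟨_, ht, hts⟩ ↦ exists_isMinimal_prec_of_subset_CW htrans (hsmooth _) (hcyc m) ht hts)
      hk i
    exact hs.2 t ht.1 hts
  refine Fin.of_add_one_imp (P := fun k ↦ isMinimal prec (hatSet sat l (X k)) s)
    (fun k hk ↦ ?_) hs j
  rcases hsmooth _ s (mem_hatSet_of_subset_CW (hcyc k) hk) with hmin | hbelow
  exacts [hmin, (hnone k hbelow).elim]

end Model

theorem stmt_12_general {L U S : Type*} (sat : U → L → Prop)
    (l : S → Set U) (prec : S → S → Prop)
    (hsmooth : ∀ X : Set L, smoothSet prec (hatSet sat l X))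
    (htrans : ∀ s t v : S, prec s t → prec t v → prec s v) :
    ∀ (n : ℕ) [NeZero n] (X : Fin n → Set L),
      (∀ i : Fin n, X i ⊆ CW sat l prec (X (i + 1))) →
      ∀ i j : Fin n, CW sat l prec (X i) = CW sat l prec (X j) := by
  intro n _ X hcyc i j
  ext a
  exact ⟨fun h s hs ↦ h s (isMinimal_of_cycle htrans hsmooth hcyc hs i),
    fun h s hs ↦ h s (isMinimal_of_cycle htrans hsmooth hcyc hs j)⟩

/-- a cumulative ordered model (irreflexive and transitive
preference relation) defines a strongly cumulative operation. -/
theorem stmt_12 {L U S : Type*} (Cn : Set L → Set L) (sat : U → L → Prop)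
    (l : S → Set U) (prec : S → S → Prop)
    (hCn : ∀ (X : Set L) (a : L), a ∈ Cn X ↔ ∀ m : U, (∀ x ∈ X, sat m x) → sat m a)
    (hne : ∀ s : S, (l s).Nonempty)
    (hsmooth : ∀ X : Set L, smoothSet prec (hatSet sat l X))
    (hirr : ∀ s : S, ¬ prec s s)
    (htrans : ∀ s t v : S, prec s t → prec t v → prec s v) :
    ∀ (n : ℕ) [NeZero n] (X : Fin n → Set L),
      (∀ i : Fin n, X i ⊆ CW sat l prec (X (i + 1))) →
      ∀ i j : Fin n, CW sat l prec (X i) = CW sat l prec (X j) :=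
  stmt_12_general sat l prec hsmooth htrans
end

section
/- Let C be a cumulative operation. Then the following are equivalent: (1) for any theories X, Y, C(X) ∩ C(Y) ⊆ C(X ∩ Y); (2) for any sets of formulas X, Y, if Y ⊆ C(X), then Y ⊆ C(Cn(X) ∩ Cn(Y)). -/
/-- for a cumulative operation C the two formulations of weak
distributivity are equivalent. -/
theorem stmt_13 {L : Type*} (Cn C : Set L → Set L)
    (hInc : ∀ X : Set L, X ⊆ Cn X)
    (hMono : ∀ X Y : Set L, X ⊆ Y → Cn X ⊆ Cn Y)
    (hIdem : ∀ X : Set L, Cn (Cn X) = Cn X)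
    (hCpt : ∀ (X : Set L) (a : L), a ∈ Cn X → ∃ A : Set L, A ⊆ X ∧ A.Finite ∧ a ∈ Cn A)
    (hCInc : ∀ X : Set L, X ⊆ C X)
    (hLAbs : ∀ X : Set L, Cn (C X) = C X)
    (hRAbs : ∀ X Y : Set L, Cn X = Cn Y → C X = C Y)
    (hCut : ∀ X Y : Set L, Y ⊆ C X → C (X ∪ Y) ⊆ C X)
    (hCM : ∀ X Y : Set L, Y ⊆ C X → C X ⊆ C (X ∪ Y)) :
    (∀ X Y : Set L, Cn X = X → Cn Y = Y → C X ∩ C Y ⊆ C (X ∩ Y)) ↔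
    (∀ X Y : Set L, Y ⊆ C X → Y ⊆ C (Cn X ∩ Cn Y)) := by
  have interTh : ∀ A B : Set L, Cn A = A → Cn B = B → Cn (A ∩ B) = A ∩ B := by
    intro A B hA hB
    apply Set.Subset.antisymm _ (hInc _)
    intro a ha
    exact ⟨hA ▸ hMono _ _ Set.inter_subset_left ha,
           hB ▸ hMono _ _ Set.inter_subset_right ha⟩
  constructor
  · intro h1 X Y hY
    have hXY : Y ⊆ C (Cn X) := by
      have : C X = C (Cn X) := hRAbs X (Cn X) (hIdem X).symm
      exact this ▸ hY
    have hYY : Y ⊆ C (Cn Y) := (hInc Y).trans (hCInc (Cn Y))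
    exact fun a ha => h1 (Cn X) (Cn Y) (hIdem X) (hIdem Y) ⟨hXY ha, hYY ha⟩
  · intro h2 X Y hX hY
    set D := C X ∩ C Y with hDdef
    have hDth : Cn D = D := interTh _ _ (hLAbs X) (hLAbs Y)
    have eq1 : Cn X ∩ Cn D = X ∩ C Y := by
      rw [hX, hDth]
      ext a; constructor
      · rintro ⟨h, _, h2⟩; exact ⟨h, h2⟩
      · rintro ⟨h1, h2⟩; exact ⟨h1, hCInc X h1, h2⟩
    have eq2 : Cn Y ∩ Cn D = Y ∩ C X := by
      rw [hY, hDth]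
      ext a; constructor
      · rintro ⟨h, h2, _⟩; exact ⟨h, h2⟩
      · rintro ⟨h1, h2⟩; exact ⟨h1, h2, hCInc Y h1⟩
    have hD1 : D ⊆ C (X ∩ C Y) := by
      have := h2 X D Set.inter_subset_left
      rwa [eq1] at this
    have hD2 : D ⊆ C (Y ∩ C X) := by
      have := h2 Y D Set.inter_subset_right
      rwa [eq2] at this
    set W := X ∩ C Y with hWdef
    have hWth : Cn W = W := interTh _ _ hX (hLAbs Y)
    have hWD : W ⊆ D := fun a ha => ⟨hCInc X ha.1, ha.2⟩
    have hW2 : W ⊆ C (Y ∩ C X) := hWD.trans hD2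
    have hW3 : W ⊆ C (X ∩ Y) := by
      have h := h2 (Y ∩ C X) W hW2
      have eq3 : Cn (Y ∩ C X) ∩ Cn W = X ∩ Y := by
        rw [interTh _ _ hY (hLAbs X), hWth]
        ext a; constructor
        · rintro ⟨⟨h1, _⟩, h3, _⟩; exact ⟨h3, h1⟩
        · rintro ⟨h1, h3⟩; exact ⟨⟨h3, hCInc X h1⟩, h1, hCInc Y h3⟩
      rwa [eq3] at h
    have hUnion : (X ∩ Y) ∪ W = W := by
      apply Set.union_eq_self_of_subset_left
      exact fun a ha => ⟨ha.1, hCInc Y ha.2⟩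
    have hCW : C W = C (X ∩ Y) := by
      have h1' := hCut (X ∩ Y) W hW3
      have h2' := hCM (X ∩ Y) W hW3
      rw [hUnion] at h1' h2'
      exact Set.Subset.antisymm h1' h2'
    exact hD1.trans (hCW ▸ Set.Subset.refl _)
end

section
/- If the language L is admissible (Cn(X∪Y) ∩ Cn(X∪Z) = Cn(X ∪ (Y∩Z)) for all theories X, Y, Z), then any weakly distributive cumulative operation is distributive: C(Z∪X) ∩ C(Z∪Y) ⊆ C(Z ∪ (Cn(X) ∩ Cn(Y))) for all X, Y, Z. -/
/-- if the language is admissible, any weakly distributive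
cumulative operation is distributive. -/
theorem stmt_14 {L : Type*} (Cn C : Set L → Set L)
    (hInc : ∀ X : Set L, X ⊆ Cn X)
    (hMono : ∀ X Y : Set L, X ⊆ Y → Cn X ⊆ Cn Y)
    (hIdem : ∀ X : Set L, Cn (Cn X) = Cn X)
    (hCpt : ∀ (X : Set L) (a : L), a ∈ Cn X → ∃ A : Set L, A ⊆ X ∧ A.Finite ∧ a ∈ Cn A)
    -- L is admissible
    (hAdm : ∀ X Y Z : Set L, Cn X = X → Cn Y = Y → Cn Z = Z →
      Cn (X ∪ Y) ∩ Cn (X ∪ Z) = Cn (X ∪ (Y ∩ Z)))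
    -- C is a cumulative inference operation
    (hCInc : ∀ X : Set L, X ⊆ C X)
    (hLAbs : ∀ X : Set L, Cn (C X) = C X)
    (hRAbs : ∀ X Y : Set L, Cn X = Cn Y → C X = C Y)
    (hCut : ∀ X Y : Set L, Y ⊆ C X → C (X ∪ Y) ⊆ C X)
    (hCM : ∀ X Y : Set L, Y ⊆ C X → C X ⊆ C (X ∪ Y))
    -- C is weakly distributive
    (hWD : ∀ X Y : Set L, Cn X = X → Cn Y = Y → C X ∩ C Y ⊆ C (X ∩ Y)) :
    -- C is distributive
    ∀ X Y Z : Set L, C (Z ∪ X) ∩ C (Z ∪ Y) ⊆ C (Z ∪ (Cn X ∩ Cn Y)) := by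
  intro X Y Z
  -- Cn (Cn A ∪ Cn B) = Cn (A ∪ B)
  have key : ∀ A B : Set L, Cn (Cn A ∪ Cn B) = Cn (A ∪ B) := by
    intro A B
    apply Set.Subset.antisymm
    · have h1 : Cn A ∪ Cn B ⊆ Cn (A ∪ B) := by
        apply Set.union_subset
        · exact hMono _ _ Set.subset_union_left
        · exact hMono _ _ Set.subset_union_right
      calc Cn (Cn A ∪ Cn B) ⊆ Cn (Cn (A ∪ B)) := hMono _ _ h1
        _ = Cn (A ∪ B) := hIdem _
    · exact hMono _ _ (Set.union_subset_union (hInc A) (hInc B))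
  have h1 : C (Z ∪ X) = C (Cn (Z ∪ X)) := hRAbs _ _ (hIdem _).symm
  have h2 : C (Z ∪ Y) = C (Cn (Z ∪ Y)) := hRAbs _ _ (hIdem _).symm
  have hA : Cn (Z ∪ X) ∩ Cn (Z ∪ Y) = Cn (Z ∪ (Cn X ∩ Cn Y)) := by
    have := hAdm (Cn Z) (Cn X) (Cn Y) (hIdem _) (hIdem _) (hIdem _)
    rw [key, key] at this
    rw [this]
    apply Set.Subset.antisymm
    · calc Cn (Cn Z ∪ (Cn X ∩ Cn Y)) ⊆ Cn (Cn (Z ∪ (Cn X ∩ Cn Y))) := by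
            apply hMono
            apply Set.union_subset
            · exact hMono _ _ Set.subset_union_left
            · exact fun a ha => hInc _ (Or.inr ha)
        _ = Cn (Z ∪ (Cn X ∩ Cn Y)) := hIdem _
    · exact hMono _ _ (Set.union_subset_union_left _ (hInc Z))
  have hwd := hWD (Cn (Z ∪ X)) (Cn (Z ∪ Y)) (hIdem _) (hIdem _)
  rw [hA] at hwd
  rw [h1, h2]
  intro a ha
  have := hwd ha
  rwa [← hRAbs _ _ (hIdem (Z ∪ (Cn X ∩ Cn Y))).symm] at this
end

section
/- If C is a distributive operation, then the relation ≼_C defined on theories by X ≼_C Y iff X ⊆ C(X ∩ Y) is transitive (and reflexive), hence a preorder. -/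
/-- for a distributive operation C, the relation
X ≼_C Y iff X ⊆ C(X ∩ Y) on theories is reflexive and transitive. -/
theorem stmt_15 {L : Type*} (Cn C : Set L → Set L)
    (hInc : ∀ X : Set L, X ⊆ Cn X)
    (hMono : ∀ X Y : Set L, X ⊆ Y → Cn X ⊆ Cn Y)
    (hIdem : ∀ X : Set L, Cn (Cn X) = Cn X)
    (hCpt : ∀ (X : Set L) (a : L), a ∈ Cn X → ∃ A : Set L, A ⊆ X ∧ A.Finite ∧ a ∈ Cn A)
    -- C is a cumulative inference operation
    (hCInc : ∀ X : Set L, X ⊆ C X)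
    (hLAbs : ∀ X : Set L, Cn (C X) = C X)
    (hRAbs : ∀ X Y : Set L, Cn X = Cn Y → C X = C Y)
    (hCut : ∀ X Y : Set L, Y ⊆ C X → C (X ∪ Y) ⊆ C X)
    (hCM : ∀ X Y : Set L, Y ⊆ C X → C X ⊆ C (X ∪ Y))
    -- C is distributive
    (hDist : ∀ X Y Z : Set L, C (Z ∪ X) ∩ C (Z ∪ Y) ⊆ C (Z ∪ (Cn X ∩ Cn Y))) :
    -- ≼_C is reflexive on theories
    (∀ X : Set L, Cn X = X → X ⊆ C (X ∩ X)) ∧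
    -- ≼_C is transitive on theories
    (∀ X Y Z : Set L, Cn X = X → Cn Y = Y → Cn Z = Z →
      X ⊆ C (X ∩ Y) → Y ⊆ C (Y ∩ Z) → X ⊆ C (X ∩ Z)) := by
  -- cumulativity lemma: A ⊆ Cn B and B ⊆ C A imply C A = C B
  have key : ∀ A B : Set L, A ⊆ Cn B → B ⊆ C A → C A = C B := by
    intro A B hAB hBA
    have h1 : C (A ∪ B) = C A :=
      Set.Subset.antisymm (hCut A B hBA) (hCM A B hBA)
    have h2 : Cn (A ∪ B) = Cn B := by
      apply Set.Subset.antisymm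
      · have : A ∪ B ⊆ Cn B := Set.union_subset hAB (hInc B)
        calc Cn (A ∪ B) ⊆ Cn (Cn B) := hMono _ _ this
          _ = Cn B := hIdem B
      · exact hMono _ _ Set.subset_union_right
    have h3 : C (A ∪ B) = C B := hRAbs _ _ h2
    rw [← h1, h3]
  constructor
  · intro X hX
    rw [Set.inter_self]
    exact hCInc X
  · intro X Y Z hX hY hZ hXY hYZ
    -- theories are closed under intersection
    have thInter : ∀ U V : Set L, Cn U = U → Cn V = V → Cn (U ∩ V) = U ∩ V := by
      intro U V hU hV
      apply Set.Subset.antisymm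
      · exact Set.subset_inter
          (by calc Cn (U ∩ V) ⊆ Cn U := hMono _ _ Set.inter_subset_left
                _ = U := hU)
          (by calc Cn (U ∩ V) ⊆ Cn V := hMono _ _ Set.inter_subset_right
                _ = V := hV)
      · exact hInc _
    have hXYth : Cn (X ∩ Y) = X ∩ Y := thInter X Y hX hY
    have hYZth : Cn (Y ∩ Z) = Y ∩ Z := thInter Y Z hY hZ
    -- distributivity with empty base: C(X∩Y) ∩ C(Y∩Z) ⊆ C(X∩Y∩Z)
    have hD : C (X ∩ Y) ∩ C (Y ∩ Z) ⊆ C (X ∩ Y ∩ Z) := by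
      have := hDist (X ∩ Y) (Y ∩ Z) ∅
      simp only [Set.empty_union, hXYth, hYZth] at this
      have heq : (X ∩ Y) ∩ (Y ∩ Z) = X ∩ Y ∩ Z := by
        ext a; simp only [Set.mem_inter_iff]; tauto
      rwa [heq] at this
    set W := X ∩ Y ∩ Z with hW
    -- X ∩ Y ⊆ C W
    have h1 : X ∩ Y ⊆ C W := by
      intro a ha
      exact hD ⟨hXY ha.1, hYZ ha.2⟩
    -- C W = C (X ∩ Y)
    have hWsub : W ⊆ X ∩ Y := Set.inter_subset_left
    have h2 : C W = C (X ∩ Y) :=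
      key W (X ∩ Y) (hWsub.trans (hInc _)) h1
    -- hence X ⊆ C W
    have h3 : X ⊆ C W := by rw [h2]; exact hXY
    -- C W = C (X ∩ Z)
    have hWsub2 : W ⊆ X ∩ Z :=
      Set.subset_inter (fun a ha => ha.1.1) (fun a ha => ha.2)
    have h4 : C W = C (X ∩ Z) :=
      key W (X ∩ Z) (hWsub2.trans (hInc _))
        (fun a ha => h3 ha.1)
    rw [← h4]
    exact h3
end

section
/- Any distributive operation is strongly cumulative: if C is distributive and X_i ⊆ C(X_{i+1}) for i = 0,…,n−1 (indices mod n), then C(X_i) = C(X_j) for all i, j. -/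
/-!
Walk once around the cycle starting from `X i`, carrying a set `W` with `C W = C (X i)`. If `W`
lies in `Cn` of the current set, then `W ⊆ C` of the next set `B`, so distributivity with `Z = ∅`
gives `W ⊆ C (Cn W ∩ Cn B)`; reciprocity (cut plus cautious monotony) then yields
`C W = C (Cn W ∩ Cn B)`. After a full turn `W = ⋂ j, Cn (X j)`, which does not depend on the
starting point.
-/

section

variable {L : Type*} {Cn C : Set L → Set L}

theorem Cn_biInter_Cn {ι : Type*} (hInc : ∀ X, X ⊆ Cn X) (hMono : ∀ X Y, X ⊆ Y → Cn X ⊆ Cn Y)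
    (hIdem : ∀ X, Cn (Cn X) = Cn X) (s : Set ι) (f : ι → Set L) :
    Cn (⋂ i ∈ s, Cn (f i)) = ⋂ i ∈ s, Cn (f i) :=
  (Set.subset_iInter₂ fun i hi =>
    (hMono _ _ (Set.biInter_subset_of_mem (t := fun i => Cn (f i)) hi)).trans
      (hIdem (f i)).le).antisymm (hInc _)

theorem Cn_subset_C_of_subset (hMono : ∀ X Y, X ⊆ Y → Cn X ⊆ Cn Y)
    (hLAbs : ∀ X, Cn (C X) = C X) {A B : Set L} (h : A ⊆ C B) : Cn A ⊆ C B :=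
  hLAbs B ▸ hMono _ _ h

theorem C_eq_of_subset_C_of_subset_C (hCut : ∀ X Y, Y ⊆ C X → C (X ∪ Y) ⊆ C X)
    (hCM : ∀ X Y, Y ⊆ C X → C X ⊆ C (X ∪ Y)) {A B : Set L} (hAB : A ⊆ C B) (hBA : B ⊆ C A) :
    C A = C B := by
  rw [(hCM A B hBA).antisymm (hCut A B hBA), (hCM B A hAB).antisymm (hCut B A hAB),
    Set.union_comm]

theorem C_eq_C_Cn_inter_Cn (hMono : ∀ X Y, X ⊆ Y → Cn X ⊆ Cn Y) (hCInc : ∀ X, X ⊆ C X)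
    (hLAbs : ∀ X, Cn (C X) = C X) (hCut : ∀ X Y, Y ⊆ C X → C (X ∪ Y) ⊆ C X)
    (hCM : ∀ X Y, Y ⊆ C X → C X ⊆ C (X ∪ Y))
    (hDist : ∀ X Y Z, C (Z ∪ X) ∩ C (Z ∪ Y) ⊆ C (Z ∪ (Cn X ∩ Cn Y)))
    {W B : Set L} (h : W ⊆ C B) : C W = C (Cn W ∩ Cn B) := by
  have hW : W ⊆ C (Cn W ∩ Cn B) := fun a ha => by
    simpa using hDist W B ∅ ⟨by simpa using hCInc W ha, by simpa using h ha⟩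
  exact C_eq_of_subset_C_of_subset_C hCut hCM hW
    (Set.inter_subset_left.trans (Cn_subset_C_of_subset hMono hLAbs (hCInc W)))

theorem C_eq_C_biInter_Cn_of_chain (hInc : ∀ X, X ⊆ Cn X) (hMono : ∀ X Y, X ⊆ Y → Cn X ⊆ Cn Y)
    (hIdem : ∀ X, Cn (Cn X) = Cn X) (hCInc : ∀ X, X ⊆ C X)
    (hLAbs : ∀ X, Cn (C X) = C X) (hRAbs : ∀ X Y, Cn X = Cn Y → C X = C Y)
    (hCut : ∀ X Y, Y ⊆ C X → C (X ∪ Y) ⊆ C X)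
    (hCM : ∀ X Y, Y ⊆ C X → C X ⊆ C (X ∪ Y))
    (hDist : ∀ X Y Z, C (Z ∪ X) ∩ C (Z ∪ Y) ⊆ C (Z ∪ (Cn X ∩ Cn Y)))
    (f : ℕ → Set L) (k : ℕ) (hf : ∀ m < k, f m ⊆ C (f (m + 1))) :
    C (f 0) = C (⋂ m ∈ Set.Iic k, Cn (f m)) := by
  induction k with
  | zero => simpa using hRAbs _ _ (hIdem (f 0)).symm
  | succ k ih =>
    set W := ⋂ m ∈ Set.Iic k, Cn (f m)
    have hW : W ⊆ C (f (k + 1)) :=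
      (Set.biInter_subset_of_mem (Set.mem_Iic.2 le_rfl)).trans
        (Cn_subset_C_of_subset hMono hLAbs (hf k k.lt_succ_self))
    rw [ih fun m hm => hf m (hm.trans k.lt_succ_self),
      C_eq_C_Cn_inter_Cn hMono hCInc hLAbs hCut hCM hDist hW,
      Cn_biInter_Cn hInc hMono hIdem, ← Order.succ_eq_add_one, Order.Iic_succ,
      Set.biInter_insert, Set.inter_comm]

open Fin.NatCast in
theorem C_eq_C_iInter_Cn_of_cycle (hInc : ∀ X, X ⊆ Cn X) (hMono : ∀ X Y, X ⊆ Y → Cn X ⊆ Cn Y)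
    (hIdem : ∀ X, Cn (Cn X) = Cn X) (hCInc : ∀ X, X ⊆ C X)
    (hLAbs : ∀ X, Cn (C X) = C X) (hRAbs : ∀ X Y, Cn X = Cn Y → C X = C Y)
    (hCut : ∀ X Y, Y ⊆ C X → C (X ∪ Y) ⊆ C X)
    (hCM : ∀ X Y, Y ⊆ C X → C X ⊆ C (X ∪ Y))
    (hDist : ∀ X Y Z, C (Z ∪ X) ∩ C (Z ∪ Y) ⊆ C (Z ∪ (Cn X ∩ Cn Y)))
    {n : ℕ} [NeZero n] (X : Fin n → Set L) (hX : ∀ i, X i ⊆ C (X (i + 1))) (i : Fin n) :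
    C (X i) = C (⋂ j, Cn (X j)) := by
  have hchain := C_eq_C_biInter_Cn_of_chain hInc hMono hIdem hCInc hLAbs hRAbs hCut hCM hDist
    (fun m => X (i + m)) (n - 1) fun m _ => by simpa [add_assoc] using hX (i + m)
  have hcover : ⋂ m ∈ Set.Iic (n - 1), Cn (X (i + m)) = ⋂ j, Cn (X j) := by
    refine (Set.subset_iInter fun j => ?_).antisymm
      (Set.subset_iInter₂ fun m _ => Set.iInter_subset _ _)
    have hm : (j - i).val ∈ Set.Iic (n - 1) := Nat.le_sub_one_of_lt (j - i).isLt
    simpa using Set.biInter_subset_of_mem (t := fun m : ℕ => Cn (X (i + m))) hm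
  rwa [hcover, Nat.cast_zero, add_zero] at hchain

end

theorem stmt_16_general {L : Type*} (Cn C : Set L → Set L)
    (hInc : ∀ X : Set L, X ⊆ Cn X)
    (hMono : ∀ X Y : Set L, X ⊆ Y → Cn X ⊆ Cn Y)
    (hIdem : ∀ X : Set L, Cn (Cn X) = Cn X)
    -- C is a cumulative inference operation
    (hCInc : ∀ X : Set L, X ⊆ C X)
    (hLAbs : ∀ X : Set L, Cn (C X) = C X)
    (hRAbs : ∀ X Y : Set L, Cn X = Cn Y → C X = C Y)
    (hCut : ∀ X Y : Set L, Y ⊆ C X → C (X ∪ Y) ⊆ C X)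
    (hCM : ∀ X Y : Set L, Y ⊆ C X → C X ⊆ C (X ∪ Y))
    -- C is distributive
    (hDist : ∀ X Y Z : Set L, C (Z ∪ X) ∩ C (Z ∪ Y) ⊆ C (Z ∪ (Cn X ∩ Cn Y))) :
    ∀ (n : ℕ) [NeZero n] (X : Fin n → Set L),
      (∀ i : Fin n, X i ⊆ C (X (i + 1))) →
      ∀ i j : Fin n, C (X i) = C (X j) := by
  intro n _ X hX i j
  rw [C_eq_C_iInter_Cn_of_cycle hInc hMono hIdem hCInc hLAbs hRAbs hCut hCM hDist X hX i,
    C_eq_C_iInter_Cn_of_cycle hInc hMono hIdem hCInc hLAbs hRAbs hCut hCM hDist X hX j]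

/-- any distributive operation is strongly cumulative. -/
theorem stmt_16 {L : Type*} (Cn C : Set L → Set L)
    (hInc : ∀ X : Set L, X ⊆ Cn X)
    (hMono : ∀ X Y : Set L, X ⊆ Y → Cn X ⊆ Cn Y)
    (hIdem : ∀ X : Set L, Cn (Cn X) = Cn X)
    (hCpt : ∀ (X : Set L) (a : L), a ∈ Cn X → ∃ A : Set L, A ⊆ X ∧ A.Finite ∧ a ∈ Cn A)
    -- C is a cumulative inference operation
    (hCInc : ∀ X : Set L, X ⊆ C X)
    (hLAbs : ∀ X : Set L, Cn (C X) = C X)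
    (hRAbs : ∀ X Y : Set L, Cn X = Cn Y → C X = C Y)
    (hCut : ∀ X Y : Set L, Y ⊆ C X → C (X ∪ Y) ⊆ C X)
    (hCM : ∀ X Y : Set L, Y ⊆ C X → C X ⊆ C (X ∪ Y))
    -- C is distributive
    (hDist : ∀ X Y Z : Set L, C (Z ∪ X) ∩ C (Z ∪ Y) ⊆ C (Z ∪ (Cn X ∩ Cn Y))) :
    ∀ (n : ℕ) [NeZero n] (X : Fin n → Set L),
      (∀ i : Fin n, X i ⊆ C (X (i + 1))) →
      ∀ i j : Fin n, C (X i) = C (X j) :=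
  stmt_16_general Cn C hInc hMono hIdem hCInc hLAbs hRAbs hCut hCM hDist
end

section
/- Let C be a cumulative operation. Then C is deductive (C(X∪Y) ⊆ Cn(X ∪ C(Y)) for all X, Y) if and only if for all X, Y with Y ⊆ C(X), C(X) ⊆ Cn(X ∪ C(Y)), and also if and only if for all X, Y with Y ≼_C X (i.e., Y ⊆ C(Cn(X)∩Cn(Y))), C(X) ⊆ Cn(X ∪ C(Y)). -/
/-- characterizations of deductive cumulative operations. -/
theorem stmt_17 {L : Type*} (Cn C : Set L → Set L)
    (hInc : ∀ X : Set L, X ⊆ Cn X)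
    (hMono : ∀ X Y : Set L, X ⊆ Y → Cn X ⊆ Cn Y)
    (hIdem : ∀ X : Set L, Cn (Cn X) = Cn X)
    (hCpt : ∀ (X : Set L) (a : L), a ∈ Cn X → ∃ A : Set L, A ⊆ X ∧ A.Finite ∧ a ∈ Cn A)
    -- C is a cumulative inference operation
    (hCInc : ∀ X : Set L, X ⊆ C X)
    (hLAbs : ∀ X : Set L, Cn (C X) = C X)
    (hRAbs : ∀ X Y : Set L, Cn X = Cn Y → C X = C Y)
    (hCut : ∀ X Y : Set L, Y ⊆ C X → C (X ∪ Y) ⊆ C X)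
    (hCM : ∀ X Y : Set L, Y ⊆ C X → C X ⊆ C (X ∪ Y)) :
    ((∀ X Y : Set L, C (X ∪ Y) ⊆ Cn (X ∪ C Y)) ↔
      (∀ X Y : Set L, Y ⊆ C X → C X ⊆ Cn (X ∪ C Y))) ∧
    ((∀ X Y : Set L, C (X ∪ Y) ⊆ Cn (X ∪ C Y)) ↔
      (∀ X Y : Set L, Y ⊆ C (Cn X ∩ Cn Y) → C X ⊆ Cn (X ∪ C Y))) := by
  have hsetXY : ∀ X Y : Set L, (X ∪ Y) ∪ C Y = X ∪ C Y := by
    intro X Y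
    rw [Set.union_assoc, Set.union_eq_self_of_subset_left (hCInc Y)]
  have hD1 : (∀ X Y : Set L, C (X ∪ Y) ⊆ Cn (X ∪ C Y)) →
      ∀ X Y : Set L, Y ⊆ C X → C X ⊆ Cn (X ∪ C Y) :=
    fun hD X Y hY => (hCM X Y hY).trans (hD X Y)
  have h1D : (∀ X Y : Set L, Y ⊆ C X → C X ⊆ Cn (X ∪ C Y)) →
      ∀ X Y : Set L, C (X ∪ Y) ⊆ Cn (X ∪ C Y) := by
    intro h X Y
    have hY : Y ⊆ C (X ∪ Y) := Set.subset_union_right.trans (hCInc _)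
    have := h (X ∪ Y) Y hY
    rwa [hsetXY] at this
  have hD2 : (∀ X Y : Set L, C (X ∪ Y) ⊆ Cn (X ∪ C Y)) →
      ∀ X Y : Set L, Y ⊆ C (Cn X ∩ Cn Y) → C X ⊆ Cn (X ∪ C Y) := by
    intro hD X Y hY
    set Z := Cn X ∩ Cn Y with hZdef
    have hZX : Z ⊆ Cn X := Set.inter_subset_left
    have hZY : Z ⊆ Cn Y := Set.inter_subset_right
    have hCnXZ : Cn (X ∪ Z) = Cn X := by
      apply Set.Subset.antisymm
      · exact (hMono _ _ (Set.union_subset (hInc X) hZX)).trans (hIdem X).le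
      · exact hMono _ _ Set.subset_union_left
    have hCnYZ : Cn (Z ∪ Y) = Cn Y := by
      apply Set.Subset.antisymm
      · exact (hMono _ _ (Set.union_subset hZY (hInc Y))).trans (hIdem Y).le
      · exact hMono _ _ Set.subset_union_right
    have hCZ_eq : C Z = C Y := by
      have h1 : C (Z ∪ Y) = C Z := Set.Subset.antisymm (hCut Z Y hY) (hCM Z Y hY)
      have h2 : C (Z ∪ Y) = C Y := hRAbs _ _ hCnYZ
      rw [← h1, h2]
    have hCX : C X = C (X ∪ Z) := hRAbs X (X ∪ Z) hCnXZ.symm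
    calc C X = C (X ∪ Z) := hCX
      _ ⊆ Cn (X ∪ C Z) := hD X Z
      _ = Cn (X ∪ C Y) := by rw [hCZ_eq]
  have h2D : (∀ X Y : Set L, Y ⊆ C (Cn X ∩ Cn Y) → C X ⊆ Cn (X ∪ C Y)) →
      ∀ X Y : Set L, C (X ∪ Y) ⊆ Cn (X ∪ C Y) := by
    intro h X Y
    have hY : Y ⊆ C (Cn (X ∪ Y) ∩ Cn Y) :=
      (Set.subset_inter (Set.subset_union_right.trans (hInc _)) (hInc Y)).trans (hCInc _)
    have := h (X ∪ Y) Y hY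
    rwa [hsetXY] at this
  exact ⟨⟨hD1, h1D⟩, ⟨hD2, h2D⟩⟩
end

section
/- Let C be a deductive and distributive operation. If X ≼_C Y ≼_C Z (where U ≼_C V means U ⊆ C(Cn(U) ∩ Cn(V))), then Y ⊆ Cn(Z ∪ C(X)). -/
/-- key lemma for deductive distributive operations: if
X ≼_C Y ≼_C Z then Y ⊆ Cn(Z ∪ C(X)). -/
theorem stmt_18 {L : Type*} (Cn C : Set L → Set L)
    (hInc : ∀ X : Set L, X ⊆ Cn X)
    (hMono : ∀ X Y : Set L, X ⊆ Y → Cn X ⊆ Cn Y)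
    (hIdem : ∀ X : Set L, Cn (Cn X) = Cn X)
    (hCpt : ∀ (X : Set L) (a : L), a ∈ Cn X → ∃ A : Set L, A ⊆ X ∧ A.Finite ∧ a ∈ Cn A)
    -- C is a cumulative inference operation
    (hCInc : ∀ X : Set L, X ⊆ C X)
    (hLAbs : ∀ X : Set L, Cn (C X) = C X)
    (hRAbs : ∀ X Y : Set L, Cn X = Cn Y → C X = C Y)
    (hCut : ∀ X Y : Set L, Y ⊆ C X → C (X ∪ Y) ⊆ C X)
    (hCM : ∀ X Y : Set L, Y ⊆ C X → C X ⊆ C (X ∪ Y))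
    -- C is deductive
    (hDed : ∀ X Y : Set L, C (X ∪ Y) ⊆ Cn (X ∪ C Y))
    -- C is distributive
    (hDist : ∀ X Y Z : Set L, C (Z ∪ X) ∩ C (Z ∪ Y) ⊆ C (Z ∪ (Cn X ∩ Cn Y))) :
    ∀ X Y Z : Set L,
      X ⊆ C (Cn X ∩ Cn Y) → Y ⊆ C (Cn Y ∩ Cn Z) →
      Y ⊆ Cn (Z ∪ C X) := by
  intro X Y Z hXY hYZ
  set W := Cn X ∩ Cn Y with hW
  set V := Cn Y ∩ Cn Z with hV
  -- Cn U ⊆ C U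
  have hCnC : ∀ U : Set L, Cn U ⊆ C U := by
    intro U
    have h := hMono U (C U) (hCInc U)
    rwa [hLAbs] at h
  -- if B ⊆ C A then C (A ∪ B) = C A
  have hEq : ∀ A B : Set L, B ⊆ C A → C (A ∪ B) = C A := fun A B h =>
    subset_antisymm (hCut A B h) (hCM A B h)
  -- if B ⊆ Cn A then Cn (A ∪ B) = Cn A
  have hCnEq : ∀ A B : Set L, B ⊆ Cn A → Cn (A ∪ B) = Cn A := by
    intro A B h
    apply subset_antisymm
    · have h1 : A ∪ B ⊆ Cn A := Set.union_subset (hInc A) h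
      have h2 := hMono _ _ h1
      rwa [hIdem] at h2
    · exact hMono _ _ Set.subset_union_left
  -- C W = C X
  have hCWX : C W = C X := by
    have h1 : C (W ∪ X) = C W := hEq W X hXY
    have h2 : Cn (X ∪ W) = Cn X := hCnEq X W Set.inter_subset_left
    have h3 : C (X ∪ W) = C X := hRAbs _ _ h2
    rw [← h1, Set.union_comm, h3]
  -- C V = C Y
  have hCVY : C V = C Y := by
    have h1 : C (V ∪ Y) = C V := hEq V Y hYZ
    have h2 : Cn (Y ∪ V) = Cn Y := hCnEq Y V Set.inter_subset_left
    have h3 : C (Y ∪ V) = C Y := hRAbs _ _ h2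
    rw [← h1, Set.union_comm, h3]
  -- W ⊆ C V
  have hWCV : W ⊆ C V := by
    rw [hCVY]
    exact fun a ha => hCnC Y ha.2
  -- Y ⊆ C (V ∪ W)
  have hYCVW : Y ⊆ C (V ∪ W) := by
    rw [hEq V W hWCV]
    exact hYZ
  -- deductivity
  have hD : C (V ∪ W) ⊆ Cn (V ∪ C W) := hDed V W
  have hfin : Cn (V ∪ C W) ⊆ Cn (Z ∪ C X) := by
    rw [hCWX]
    have h1 : V ∪ C X ⊆ Cn (Z ∪ C X) := by
      apply Set.union_subset
      · exact fun a ha => hMono Z (Z ∪ C X) Set.subset_union_left ha.2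
      · exact (Set.subset_union_right).trans (hInc _)
    have h2 := hMono _ _ h1
    rwa [hIdem] at h2
  exact hYCVW.trans (hD.trans hfin)
end

section
/- If W = (S, l, ≺) is a full model, then the operation C_W it defines is deductive: C_W(X ∪ Y) ⊆ Cn(X ∪ C_W(Y)) for all X, Y ⊆ L. -/
/-- A state (labelled by a single world) satisfies a set of formulas. -/
def stateSat1 {L U S : Type*} (sat : U → L → Prop) (l : S → U) (s : S) (X : Set L) : Prop :=
  ∀ x ∈ X, sat (l s) x

/-- The set X̂ of states satisfying X. -/
def hatSet1 {L U S : Type*} (sat : U → L → Prop) (l : S → U) (X : Set L) : Set S :=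
  {s | stateSat1 sat l s X}

/-- The inference operation defined by a model with singleton labels. -/
def CW1 {L U S : Type*} (sat : U → L → Prop) (l : S → U) (prec : S → S → Prop)
    (X : Set L) : Set L :=
  {a | ∀ s, isMinimal prec (hatSet1 sat l X) s → sat (l s) a}

/-- the operation defined by a full model is deductive. -/
theorem stmt_19 {L U S : Type*} (Cn : Set L → Set L) (sat : U → L → Prop)
    (l : S → U) (prec : S → S → Prop)
    (hCn : ∀ (X : Set L) (a : L), a ∈ Cn X ↔ ∀ m : U, (∀ x ∈ X, sat m x) → sat m a)
    -- cumulative ordered model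
    (hsmooth : ∀ X : Set L, smoothSet prec (hatSet1 sat l X))
    (hirr : ∀ s : S, ¬ prec s s)
    (htrans : ∀ s t v : S, prec s t → prec t v → prec s v)
    -- fullness
    (hfull : ∀ (X : Set L) (m : U), (∀ a ∈ CW1 sat l prec X, sat m a) →
      (¬ ∀ a : L, sat m a) →
      ∃ s, isMinimal prec (hatSet1 sat l X) s ∧ l s = m) :
    ∀ X Y : Set L, CW1 sat l prec (X ∪ Y) ⊆ Cn (X ∪ CW1 sat l prec Y) := by
  intro X Y a ha
  rw [hCn]
  intro m hm
  by_cases hall : ∀ b : L, sat m b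
  · exact hall a
  · obtain ⟨s, hs, hls⟩ := hfull Y m (fun b hb => hm b (Or.inr hb)) hall
    have hsXY : s ∈ hatSet1 sat l (X ∪ Y) := by
      intro x hx
      rcases hx with hx | hx
      · rw [hls]; exact hm x (Or.inl hx)
      · exact hs.1 x hx
    have hmin : isMinimal prec (hatSet1 sat l (X ∪ Y)) s := by
      refine ⟨hsXY, fun t ht hpt => hs.2 t (fun y hy => ht y (Or.inr hy)) hpt⟩
    rw [← hls]
    exact ha s hmin
end
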